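/- arXiv:2104.11088 — 4 statements merged into one kernel-verified Lean document; each statement's English description precedes it below -/
import Mathlib

section
/- With r = p/q as above (p monic degree d with simple roots λ_j, deg q < d, q(λ_j) ≠ 0), for any λ with q(λ) ≠ 0 and any z with q(z) ≠ 0, z ∉ {λ_j}, z ≠ λ, the divided difference satisfies (r(λ) − r(z))/(λ − z) = Σ_{j=1}^d δ_j(z) · r(λ)/(λ − λ_j), where δ_j(z) = r(z)/(r'(λ_j)(z−λ_j)). -/
/-! Since `p` is monic with the `d` simple roots `λⱼ`, it is the nodal polynomial of these nodes,
and `deg q < d` gives the partial fraction expansion `1 / r(x) = Σⱼ (1 / r'(λⱼ)) / (x - λⱼ)`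
(the barycentric form of the Lagrange interpolant of `q`). Multiplying the expansions at `z` and
at `μ` and using `1 / ((z - λⱼ)(μ - λⱼ)) = (1 / (z - λⱼ) - 1 / (μ - λⱼ)) / (μ - z)` turns the sum
into `r(z) r(μ) (1 / r(z) - 1 / r(μ)) / (μ - z)`, the divided difference. -/

open Polynomial Finset

namespace Lagrange

variable {F ι : Type*} [Field F] {s : Finset ι} {v : ι → F}

theorem eq_nodal_of_monic_of_eval_eq_zero {p : F[X]} (hvs : Set.InjOn v s) (hp : p.Monic)
    (hdeg : p.natDegree = #s) (hroot : ∀ i ∈ s, p.eval (v i) = 0) : p = nodal s v := by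
  have hdeg' : p.degree = #s := by rw [degree_eq_natDegree hp.ne_zero, hdeg]
  refine eq_of_degree_sub_lt_of_eval_index_eq s hvs ?_ fun i hi => ?_
  · rw [← hdeg']
    exact degree_sub_lt_left (by rw [hdeg', degree_nodal]) hp.ne_zero
      (by rw [hp.leadingCoeff, nodal_monic.leadingCoeff])
  · rw [hroot i hi, eval_nodal_at_node hi]

theorem eval_div_eval_nodal_eq_sum {q : F[X]} (hvs : Set.InjOn v s) (hq : q.degree < #s) {x : F}
    (hx : ∀ i ∈ s, x ≠ v i) :
    q.eval x / (nodal s v).eval x =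
      ∑ i ∈ s, q.eval (v i) / (nodal s v).derivative.eval (v i) / (x - v i) := by
  classical
  conv_lhs => rw [eq_interpolate hvs hq, eval_interpolate_not_at_node _ hx]
  rw [mul_div_cancel_left₀ _ (eval_nodal_not_at_node hx)]
  refine sum_congr rfl fun i hi => ?_
  rw [nodalWeight_eq_eval_derivative_nodal hi]
  ring

end Lagrange

theorem div_sub_eq_sum_of_inv_eq_sum {K ι : Type*} [Field K] (s : Finset ι) (c w : ι → K)
    {a b z μ : K} (ha : a ≠ 0) (hb : b ≠ 0) (hz : ∀ i ∈ s, z ≠ w i) (hμ : ∀ i ∈ s, μ ≠ w i)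
    (hμz : μ ≠ z) (ha_inv : a⁻¹ = ∑ i ∈ s, c i / (z - w i))
    (hb_inv : b⁻¹ = ∑ i ∈ s, c i / (μ - w i)) :
    (b - a) / (μ - z) = ∑ i ∈ s, a * c i / (z - w i) * (b / (μ - w i)) := by
  have hterm : ∀ i ∈ s, a * c i / (z - w i) * (b / (μ - w i)) =
      a * b / (μ - z) * (c i / (z - w i) - c i / (μ - w i)) := fun i hi => by
    have hzi := sub_ne_zero_of_ne (hz i hi)
    have hμi := sub_ne_zero_of_ne (hμ i hi)
    have := sub_ne_zero_of_ne hμz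
    field_simp
    ring
  rw [sum_congr rfl hterm, ← mul_sum, sum_sub_distrib, ← ha_inv, ← hb_inv]
  field_simp

theorem divided_difference_decomposition_general (d : ℕ) (p q : Polynomial ℂ)
    (hp : p.Monic) (hdeg : p.natDegree = d) (lam : Fin d → ℂ)
    (hinj : Function.Injective lam) (hroot : ∀ i, p.eval (lam i) = 0)
    (hqdeg : q.degree < (d : WithBot ℕ))
    (μ : ℂ) (hμq : q.eval μ ≠ 0) (hμl : ∀ j, μ ≠ lam j)
    (z : ℂ) (hz : q.eval z ≠ 0) (hzl : ∀ j, z ≠ lam j) (hμz : μ ≠ z) :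
    (p.eval μ / q.eval μ - p.eval z / q.eval z) / (μ - z) =
      ∑ j, ((p.eval z / q.eval z) /
          ((p.derivative.eval (lam j) / q.eval (lam j)) * (z - lam j))) *
        ((p.eval μ / q.eval μ) / (μ - lam j)) := by
  have hinj' : Set.InjOn lam (univ : Finset (Fin d)) := hinj.injOn
  have hp_nodal : p = Lagrange.nodal univ lam :=
    Lagrange.eq_nodal_of_monic_of_eval_eq_zero hinj' hp (by simpa using hdeg) fun i _ => hroot i
  have hp_ne : ∀ x, (∀ j, x ≠ lam j) → p.eval x ≠ 0 := fun x hx => by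
    rw [hp_nodal]
    exact Lagrange.eval_nodal_not_at_node fun j _ => hx j
  have hpartial : ∀ x, (∀ j, x ≠ lam j) → (p.eval x / q.eval x)⁻¹ =
      ∑ j, q.eval (lam j) / p.derivative.eval (lam j) / (x - lam j) := fun x hx => by
    rw [inv_div, hp_nodal]
    exact Lagrange.eval_div_eval_nodal_eq_sum hinj' (by simpa using hqdeg) fun j _ => hx j
  rw [div_sub_eq_sum_of_inv_eq_sum univ _ lam (div_ne_zero (hp_ne z hzl) hz)
    (div_ne_zero (hp_ne μ hμl) hμq) (fun j _ => hzl j) (fun j _ => hμl j) hμz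
    (hpartial z hzl) (hpartial μ hμl)]
  refine sum_congr rfl fun j _ => ?_
  rw [← div_div, div_div_eq_mul_div]
  ring

theorem divided_difference_decomposition (d : ℕ) (hd : 1 ≤ d) (p q : Polynomial ℂ)
    (hp : p.Monic) (hdeg : p.natDegree = d) (lam : Fin d → ℂ)
    (hinj : Function.Injective lam) (hroot : ∀ i, p.eval (lam i) = 0)
    (hqdeg : q.degree < (d : WithBot ℕ)) (hql : ∀ j, q.eval (lam j) ≠ 0)
    (μ : ℂ) (hμq : q.eval μ ≠ 0) (hμl : ∀ j, μ ≠ lam j)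
    (z : ℂ) (hz : q.eval z ≠ 0) (hzl : ∀ j, z ≠ lam j) (hμz : μ ≠ z) :
    (p.eval μ / q.eval μ - p.eval z / q.eval z) / (μ - z) =
      ∑ j, ((p.eval z / q.eval z) /
          ((p.derivative.eval (lam j) / q.eval (lam j)) * (z - lam j))) *
        ((p.eval μ / q.eval μ) / (μ - lam j)) :=
  divided_difference_decomposition_general d p q hp hdeg lam hinj hroot hqdeg μ hμq hμl z hz hzl hμz
end

section
/- With r = p/q as above, the Cauchy kernel decomposes: for λ with q(λ) ≠ 0 and z with q(z) ≠ 0, z ∉ {λ_j}, z ≠ λ, and r(λ) ≠ r(z), one has 1/(λ − z) = Σ_{j=1}^d δ_j(z) K_j(λ, r(z)), where K_j(λ, w) = (1/(λ − λ_j)) · r(λ)/(r(λ) − w). -/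
set_option maxHeartbeats 1000000

private lemma aux_term (A B W zl ml : ℂ) (hzl : zl ≠ 0) (hml : ml ≠ 0)
    (hBA : B - A ≠ 0) (hW : W ≠ 0) (hmz : ml - zl ≠ 0) :
    A / (W⁻¹ * zl) * (1 / ml * (B / (B - A))) =
      A * (B / (B - A)) / (ml - zl) * (W / zl - W / ml) := by
  field_simp

private lemma aux_final (A B m : ℂ) (hA : A ≠ 0) (hB : B ≠ 0)
    (hBA : B - A ≠ 0) (hm : m ≠ 0) :
    1 / m = A * (B / (B - A)) / m * (A⁻¹ - B⁻¹) := by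
  field_simp

open Polynomial Finset

theorem cauchy_kernel_decomposition (d : ℕ) (hd : 1 ≤ d) (p q : Polynomial ℂ)
    (hp : p.Monic) (hdeg : p.natDegree = d) (lam : Fin d → ℂ)
    (hinj : Function.Injective lam) (hroot : ∀ i, p.eval (lam i) = 0)
    (hqdeg : q.degree < (d : WithBot ℕ)) (hql : ∀ j, q.eval (lam j) ≠ 0)
    (μ : ℂ) (hμq : q.eval μ ≠ 0) (hμl : ∀ j, μ ≠ lam j)
    (z : ℂ) (hz : q.eval z ≠ 0) (hzl : ∀ j, z ≠ lam j) (hμz : μ ≠ z)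
    (hr : p.eval μ / q.eval μ ≠ p.eval z / q.eval z) :
    1 / (μ - z) =
      ∑ j, ((p.eval z / q.eval z) /
          ((p.derivative.eval (lam j) / q.eval (lam j)) * (z - lam j))) *
        ((1 / (μ - lam j)) *
          ((p.eval μ / q.eval μ) / (p.eval μ / q.eval μ - p.eval z / q.eval z))) := by
  classical
  set P : Polynomial ℂ := ∏ j : Fin d, (X - C (lam j)) with hP
  have hPmonic : P.Monic := monic_prod_of_monic _ _ fun j _ => monic_X_sub_C _
  have hPdeg : P.natDegree = d := by
    rw [hP, natDegree_prod_of_monic _ _ fun j _ => monic_X_sub_C _]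
    simp
  have hevalP : ∀ x, P.eval x = ∏ j : Fin d, (x - lam j) := by
    intro x; simp [hP, eval_prod]
  -- p = P
  have hpP : p = P := by
    by_cases h0 : p - P = 0
    · exact sub_eq_zero.mp h0
    · exfalso
      apply h0
      apply eq_zero_of_natDegree_lt_card_of_eval_eq_zero (p - P) hinj
      · intro i
        rw [eval_sub, hroot i, hevalP]
        rw [Finset.prod_eq_zero (Finset.mem_univ i)] <;> simp
      · have hdP : P.degree = (d : WithBot ℕ) := by
          rw [degree_eq_natDegree hPmonic.ne_zero, hPdeg]
        have hdp : p.degree = (d : WithBot ℕ) := by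
          rw [degree_eq_natDegree hp.ne_zero, hdeg]
        have hdlt : (p - P).degree < (d : WithBot ℕ) := by
          rw [← hdp]
          exact Polynomial.degree_sub_lt (hdp.trans hdP.symm) hp.ne_zero
            (by rw [hp.leadingCoeff, hPmonic.leadingCoeff])
        rw [Fintype.card_fin]
        exact (natDegree_lt_iff_degree_lt h0).mpr (by exact_mod_cast hdlt)
  -- derivative eval
  have hD : ∀ i, p.derivative.eval (lam i) = ∏ k ∈ univ.erase i, (lam i - lam k) := by
    intro i
    have hmem : lam i ∈ (univ.val.map lam) :=
      Multiset.mem_map_of_mem _ (Finset.mem_univ i)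
    have hPP : P = (Multiset.map (fun a => X - C a) (univ.val.map lam)).prod := by
      rw [Multiset.map_map]; rfl
    rw [hpP, hPP, eval_multiset_prod_X_sub_C_derivative hmem,
      ← Multiset.map_erase _ hinj, Multiset.map_map, ← Finset.erase_val]
    rfl
  have hprodne : ∀ i, (∏ k ∈ univ.erase i, (lam i - lam k)) ≠ 0 := by
    intro i
    exact Finset.prod_ne_zero_iff.mpr fun k hk =>
      sub_ne_zero.mpr fun h => (Finset.mem_erase.mp hk).1 (hinj h).symm
  have hDne : ∀ i, p.derivative.eval (lam i) ≠ 0 := fun i => (hD i) ▸ hprodne i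
  -- Lagrange: q = Σ_j q(λ_j)/D_j * ∏_{k≠j}(X - λ_k)
  have hq0 : q ≠ 0 := fun h => hql ⟨0, hd⟩ (by simp [h])
  set S : Polynomial ℂ := ∑ j : Fin d, C (q.eval (lam j) / ∏ k ∈ univ.erase j, (lam j - lam k)) *
      ∏ k ∈ univ.erase j, (X - C (lam k)) with hS
  have hqL : q = S := by
    by_cases h0 : q - S = 0
    · exact sub_eq_zero.mp h0
    · exfalso
      apply h0
      apply eq_zero_of_natDegree_lt_card_of_eval_eq_zero (q - S) hinj
      · intro i
        rw [eval_sub, hS, eval_finset_sum, Finset.sum_eq_single i]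
        · rw [eval_mul, eval_C, eval_prod]
          simp only [eval_sub, eval_X, eval_C]
          rw [div_mul_cancel₀ _ (hprodne i)]
          ring
        · intro b _ hbi
          rw [eval_mul, eval_prod]
          exact mul_eq_zero_of_right _
            (Finset.prod_eq_zero (Finset.mem_erase.mpr ⟨Ne.symm hbi, Finset.mem_univ i⟩)
              (by simp))
        · simp
      · rw [Fintype.card_fin]
        have hqd : q.natDegree < d := (natDegree_lt_iff_degree_lt hq0).mpr hqdeg
        have hSd : S.natDegree < d := by
          have : S.natDegree ≤ d - 1 := by
            apply natDegree_sum_le_of_forall_le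
            intro j _
            apply (natDegree_C_mul_le _ _).trans
            rw [natDegree_prod_of_monic _ _ fun k _ => monic_X_sub_C _]
            simp [Finset.card_erase_of_mem]
          omega
        calc (q - S).natDegree ≤ max q.natDegree S.natDegree := natDegree_sub_le _ _
          _ < d := max_lt hqd hSd
  -- key partial fraction identity
  have hpx : ∀ x, p.eval x = ∏ j : Fin d, (x - lam j) := fun x => by rw [hpP, hevalP]
  have hkey : ∀ x, (∀ j, x ≠ lam j) →
      ∑ j : Fin d, q.eval (lam j) / p.derivative.eval (lam j) / (x - lam j)
        = q.eval x / p.eval x := by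
    intro x hx
    have hne : ∀ j, x - lam j ≠ 0 := fun j => sub_ne_zero.mpr (hx j)
    have hpe : ∀ j, (∏ k ∈ univ.erase j, (x - lam k)) ≠ 0 := fun j =>
      Finset.prod_ne_zero_iff.mpr fun k _ => hne k
    rw [hpx]
    conv_rhs => rw [hqL, hS]
    rw [eval_finset_sum, Finset.sum_div]
    apply Finset.sum_congr rfl
    intro j _
    rw [eval_mul, eval_C, eval_prod]
    simp only [eval_sub, eval_X, eval_C]
    rw [← Finset.mul_prod_erase univ _ (Finset.mem_univ j), hD j,
      mul_comm (x - lam j) (∏ k ∈ univ.erase j, (x - lam k)),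
      mul_comm (eval (lam j) q / ∏ k ∈ univ.erase j, (lam j - lam k))
        (∏ k ∈ univ.erase j, (x - lam k)),
      mul_div_mul_left _ _ (hpe j)]
  -- final computation
  have hpμ : p.eval μ ≠ 0 := by
    rw [hpx]; exact Finset.prod_ne_zero_iff.mpr fun k _ => sub_ne_zero.mpr (hμl k)
  have hpz : p.eval z ≠ 0 := by
    rw [hpx]; exact Finset.prod_ne_zero_iff.mpr fun k _ => sub_ne_zero.mpr (hzl k)
  have hμzne : μ - z ≠ 0 := sub_ne_zero.mpr hμz
  have hrne : p.eval μ / q.eval μ - p.eval z / q.eval z ≠ 0 := sub_ne_zero.mpr hr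
  have hkz := hkey z hzl
  have hkμ := hkey μ hμl
  have hterm : ∀ j : Fin d,
      ((p.eval z / q.eval z) /
          ((p.derivative.eval (lam j) / q.eval (lam j)) * (z - lam j))) *
        ((1 / (μ - lam j)) *
          ((p.eval μ / q.eval μ) / (p.eval μ / q.eval μ - p.eval z / q.eval z)))
      = ((p.eval z / q.eval z) * ((p.eval μ / q.eval μ) /
            (p.eval μ / q.eval μ - p.eval z / q.eval z)) / (μ - z)) *
          (q.eval (lam j) / p.derivative.eval (lam j) / (z - lam j)
            - q.eval (lam j) / p.derivative.eval (lam j) / (μ - lam j)) := by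
    intro j
    have h1 : z - lam j ≠ 0 := sub_ne_zero.mpr (hzl j)
    have h2 : μ - lam j ≠ 0 := sub_ne_zero.mpr (hμl j)
    have hW : q.eval (lam j) / p.derivative.eval (lam j) ≠ 0 :=
      div_ne_zero (hql j) (hDne j)
    have hms : μ - z = (μ - lam j) - (z - lam j) := by ring
    rw [show p.derivative.eval (lam j) / q.eval (lam j)
        = (q.eval (lam j) / p.derivative.eval (lam j))⁻¹ from (inv_div _ _).symm,
      hms]
    exact aux_term _ _ _ _ _ h1 h2 hrne hW (hms ▸ hμzne)
  rw [Finset.sum_congr rfl fun j _ => hterm j, ← Finset.mul_sum,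
    Finset.sum_sub_distrib, hkz, hkμ,
    show q.eval z / p.eval z = (p.eval z / q.eval z)⁻¹ from (inv_div _ _).symm,
    show q.eval μ / p.eval μ = (p.eval μ / q.eval μ)⁻¹ from (inv_div _ _).symm]
  exact aux_final _ _ _ (div_ne_zero hpz hz) (div_ne_zero hpμ hμq) hrne hμzne
end

section
/- Let p be monic of degree d with distinct roots λ_1,…,λ_d and ℓ_i the Lagrange basis polynomials, τ_{ij} = 1/(p'(λ_j)(λ_i − λ_j)). Then for each i, ℓ_i(z)² = ℓ_i(z) − p(z)·Σ_{j≠i} (τ_{ij} ℓ_i(z) + τ_{ji} ℓ_j(z)) for every z ∈ ℂ. -/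
open Polynomial Finset

theorem lagrange_square_identity (d : ℕ) (hd : 1 ≤ d) (p : Polynomial ℂ) (hp : p.Monic)
    (hdeg : p.natDegree = d) (lam : Fin d → ℂ) (hinj : Function.Injective lam)
    (hroot : ∀ i, p.eval (lam i) = 0)
    (L : Fin d → ℂ → ℂ)
    (hL : ∀ k z, L k z = (p /ₘ (X - C (lam k))).eval z / p.derivative.eval (lam k))
    (τ : Fin d → Fin d → ℂ)
    (hτ : ∀ i j, i ≠ j → τ i j = 1 / (p.derivative.eval (lam j) * (lam i - lam j)))
    (i : Fin d) (z : ℂ) :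
    (L i z) ^ 2 = L i z -
      p.eval z * ∑ j ∈ Finset.univ.erase i, (τ i j * L i z + τ j i * L j z) := by
  have hne : ∀ j k : Fin d, j ≠ k → lam j ≠ lam k := fun j k h he => h (hinj he)
  set Q : Fin d → ℂ[X] := fun k => ∏ j ∈ Finset.univ.erase k, (X - C (lam j)) with hQ
  -- p factors as the product over its roots
  have hP : p = ∏ j ∈ (Finset.univ : Finset (Fin d)), (X - C (lam j)) := by
    have hdvd : (∏ j ∈ (Finset.univ : Finset (Fin d)), (X - C (lam j))) ∣ p := by
      apply Finset.prod_dvd_of_coprime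
      · exact (Polynomial.pairwise_coprime_X_sub_C hinj).set_pairwise _
      · intro j _
        exact dvd_iff_isRoot.mpr (hroot j)
    have hmono : (∏ j ∈ (Finset.univ : Finset (Fin d)), (X - C (lam j))).Monic :=
      monic_prod_of_monic _ _ fun j _ => monic_X_sub_C _
    have hdegP : (∏ j ∈ (Finset.univ : Finset (Fin d)), (X - C (lam j))).natDegree = d := by
      rw [natDegree_prod _ _ fun j _ => X_sub_C_ne_zero (lam j)]
      simp
    exact Polynomial.eq_of_monic_of_dvd_of_natDegree_le hmono hp hdvd
      (by rw [hdeg, hdegP])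
  have hfact : ∀ k : Fin d, p = (X - C (lam k)) * Q k := by
    intro k
    rw [hP, hQ, ← Finset.mul_prod_erase _ _ (Finset.mem_univ k)]
  have hdivQ : ∀ k : Fin d, p /ₘ (X - C (lam k)) = Q k := by
    intro k
    rw [hfact k, mul_divByMonic_cancel_left _ (monic_X_sub_C _)]
  have hderiv : ∀ k : Fin d, p.derivative.eval (lam k) = (Q k).eval (lam k) := by
    intro k
    rw [hfact k]
    simp [derivative_mul]
  have haQ : ∀ k : Fin d, (Q k).eval (lam k) = ∏ j ∈ Finset.univ.erase k, (lam k - lam j) := by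
    intro k
    simp [hQ, eval_prod]
  have hane : ∀ k : Fin d, (Q k).eval (lam k) ≠ 0 := by
    intro k
    rw [haQ k]
    exact Finset.prod_ne_zero_iff.mpr fun j hj =>
      sub_ne_zero.mpr (hne k j fun h => (Finset.mem_erase.mp hj).1 h.symm)
  have hLQ : ∀ k, L k z = (Q k).eval z / (Q k).eval (lam k) := by
    intro k
    rw [hL, hdivQ, hderiv]
  have hQz : ∀ k : Fin d, (Q k).eval z = ∏ j ∈ Finset.univ.erase k, (z - lam j) := by
    intro k
    simp [hQ, eval_prod]
  -- the Lagrange basis functions sum to 1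
  have hsum : ∑ k : Fin d, L k z = 1 := by
    have hnonempty : (Finset.univ : Finset (Fin d)).Nonempty := ⟨⟨0, hd⟩, Finset.mem_univ _⟩
    have h := Lagrange.sum_basis (Set.injOn_of_injective hinj) hnonempty
    have h2 := congrArg (Polynomial.eval z) h
    rw [Polynomial.eval_finset_sum, Polynomial.eval_one] at h2
    rw [← h2]
    refine Finset.sum_congr rfl fun k _ => ?_
    rw [hLQ k, hQz k, haQ k, Lagrange.basis, Polynomial.eval_prod]
    rw [div_eq_mul_inv, ← Finset.prod_inv_distrib, ← Finset.prod_mul_distrib]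
    refine (Finset.prod_congr rfl fun j _ => ?_).symm
    simp [Lagrange.basisDivisor, mul_comm]
  -- cross terms
  have hcross : ∀ j : Fin d, j ≠ i →
      L i z * L j z = p.eval z * (τ i j * L i z + τ j i * L j z) := by
    intro j hj
    have hji : j ∈ Finset.univ.erase i := Finset.mem_erase.mpr ⟨hj, Finset.mem_univ _⟩
    have hij : i ∈ Finset.univ.erase j := Finset.mem_erase.mpr ⟨Ne.symm hj, Finset.mem_univ _⟩
    set Rz : ℂ := ∏ k ∈ (Finset.univ.erase i).erase j, (z - lam k) with hRz
    have hQi : (Q i).eval z = (z - lam j) * Rz := by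
      rw [hQz i, hRz, ← Finset.mul_prod_erase _ _ hji]
    have hQj : (Q j).eval z = (z - lam i) * Rz := by
      rw [hQz j, hRz, Finset.erase_right_comm, ← Finset.mul_prod_erase _ _ hij]
    have hpz : p.eval z = (z - lam i) * ((z - lam j) * Rz) := by
      rw [hfact i]
      simp [hQi]
    have hc : lam i - lam j ≠ 0 := sub_ne_zero.mpr (hne i j (Ne.symm hj))
    have hc' : lam j - lam i ≠ 0 := sub_ne_zero.mpr (hne j i hj)
    rw [hτ i j (Ne.symm hj), hτ j i hj, hderiv i, hderiv j, hLQ i, hLQ j, hpz, hQi, hQj]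
    have ha := hane i
    have hb := hane j
    field_simp
    ring
  -- assemble
  have hli : L i z = 1 - ∑ j ∈ Finset.univ.erase i, L j z := by
    rw [← hsum, ← Finset.add_sum_erase _ _ (Finset.mem_univ i)]
    ring
  calc (L i z) ^ 2 = L i z * L i z := sq (L i z)
    _ = L i z * (1 - ∑ j ∈ Finset.univ.erase i, L j z) := by rw [← hli]
    _ = L i z - ∑ j ∈ Finset.univ.erase i, L i z * L j z := by
        rw [mul_sub, mul_one, Finset.mul_sum]
    _ = L i z - ∑ j ∈ Finset.univ.erase i, p.eval z * (τ i j * L i z + τ j i * L j z) := by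
        rw [Finset.sum_congr rfl fun j hj => hcross j (Finset.mem_erase.mp hj).1]
    _ = L i z - p.eval z * ∑ j ∈ Finset.univ.erase i, (τ i j * L i z + τ j i * L j z) := by
        rw [Finset.mul_sum]
end

section
/- Let r = p/q as above, δ_j(z) = r(z)/(r'(λ_j)(z−λ_j)), σ_{ij} = 1/(r'(λ_j)(λ_i−λ_j)). Then for each i and each z with q(z) ≠ 0, z ∉ {λ_k}: δ_i(z)² = δ_i(z) − (p(z)/q(z))·Σ_{j≠i} (σ_{ij} δ_i(z) + σ_{ji} δ_j(z)). -/
open Polynomial Finset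


theorem aux_sigma_delta (R wi wj a b : ℂ) (hwi : wi ≠ 0) (hwj : wj ≠ 0)
    (ha : a ≠ 0) (hb : b ≠ 0) (hab : a - b ≠ 0) :
    R * (1 / (wj * (b - a)) * (R / (wi * a)) + 1 / (wi * (a - b)) * (R / (wj * b)))
      = R / (wi * a) * (R / (wj * b)) := by
  have hba : b - a ≠ 0 := fun h => hab (by linear_combination -h)
  field_simp
  ring

theorem delta_square_identity (d : ℕ) (hd : 1 ≤ d) (p q : Polynomial ℂ) (hp : p.Monic)
    (hdeg : p.natDegree = d) (lam : Fin d → ℂ) (hinj : Function.Injective lam)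
    (hroot : ∀ i, p.eval (lam i) = 0) (hqdeg : q.degree < (d : WithBot ℕ))
    (hql : ∀ j, q.eval (lam j) ≠ 0)
    (δ : Fin d → ℂ → ℂ)
    (hδ : ∀ k z, δ k z = (p.eval z / q.eval z) /
        ((p.derivative.eval (lam k) / q.eval (lam k)) * (z - lam k)))
    (σ : Fin d → Fin d → ℂ)
    (hσ : ∀ i j, i ≠ j →
        σ i j = 1 / ((p.derivative.eval (lam j) / q.eval (lam j)) * (lam i - lam j)))
    (i : Fin d)
    (z : ℂ) (hz : q.eval z ≠ 0) (hzl : ∀ k, z ≠ lam k) :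
    (δ i z) ^ 2 = δ i z - (p.eval z / q.eval z) *
      ∑ j ∈ Finset.univ.erase i, (σ i j * δ i z + σ j i * δ j z) := by
  classical
  -- basic nonvanishing facts
  have hzk : ∀ k, z - lam k ≠ 0 := fun k => sub_ne_zero.mpr (hzl k)
  have hlk : ∀ j k : Fin d, j ≠ k → lam j - lam k ≠ 0 := fun j k h =>
    sub_ne_zero.mpr (fun hc => h (hinj hc))
  -- p is the product of (X - lam k)
  have hPmonic : (∏ k : Fin d, (X - C (lam k))).Monic :=
    monic_prod_of_monic _ _ fun k _ => monic_X_sub_C _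
  have hPdeg : (∏ k : Fin d, (X - C (lam k))).natDegree = d := by
    rw [natDegree_prod _ _ fun k _ => X_sub_C_ne_zero (lam k)]
    simp
  have hpP : p = ∏ k : Fin d, (X - C (lam k)) := by
    by_cases h0 : p - ∏ k : Fin d, (X - C (lam k)) = 0
    · exact sub_eq_zero.mp h0
    have hlt : (p - ∏ k : Fin d, (X - C (lam k))).natDegree < d := by
      rw [natDegree_lt_iff_degree_lt h0]
      have hdlt : (p - ∏ k : Fin d, (X - C (lam k))).degree < p.degree :=
        degree_sub_lt (by rw [degree_eq_natDegree hp.ne_zero, degree_eq_natDegree hPmonic.ne_zero, hdeg, hPdeg])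
          hp.ne_zero (by rw [hp.leadingCoeff, hPmonic.leadingCoeff])
      calc (p - ∏ k : Fin d, (X - C (lam k))).degree < p.degree := hdlt
        _ = (d : WithBot ℕ) := by rw [degree_eq_natDegree hp.ne_zero, hdeg]
    have hz := Polynomial.eq_zero_of_natDegree_lt_card_of_eval_eq_zero
      (p - ∏ k : Fin d, (X - C (lam k))) hinj
      (fun j => by
        simp only [eval_sub, hroot j, eval_prod, eval_sub, eval_X, eval_C, zero_sub, neg_eq_zero]
        exact Finset.prod_eq_zero (mem_univ j) (by simp))
      (by simpa using hlt)
    exact absurd hz h0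
  -- the derivative of p at the roots
  have hder : ∀ j, p.derivative.eval (lam j) = ∏ k ∈ univ.erase j, (lam j - lam k) := by
    intro j
    rw [hpP, ← Finset.mul_prod_erase univ _ (mem_univ j), derivative_mul]
    simp [eval_prod]
  have hdne : ∀ j, p.derivative.eval (lam j) ≠ 0 := by
    intro j
    rw [hder j]
    exact Finset.prod_ne_zero_iff.mpr fun k hk => hlk j k (Ne.symm (mem_erase.mp hk).1)
  -- factor p.eval z
  have hpzfac : ∀ j : Fin d, p.eval z = (z - lam j) * ∏ k ∈ univ.erase j, (z - lam k) := by
    intro j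
    rw [hpP, eval_prod, ← Finset.mul_prod_erase univ _ (mem_univ j)]
    simp
  -- Lagrange interpolation: q equals its interpolant at the lam's
  have hq : q = Lagrange.interpolate univ lam fun j => q.eval (lam j) :=
    Lagrange.eq_interpolate hinj.injOn (by simpa using hqdeg)
  have hbasis : ∀ j : Fin d, (Lagrange.basis univ lam j).eval z =
      (∏ k ∈ univ.erase j, (lam j - lam k))⁻¹ * ∏ k ∈ univ.erase j, (z - lam k) := by
    intro j
    simp only [Lagrange.basis, Lagrange.basisDivisor, eval_prod, eval_mul, eval_C, eval_sub,
      eval_X, Finset.prod_mul_distrib]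
    rw [← Finset.prod_inv_distrib]
  -- each δ in terms of the Lagrange basis
  have hδ' : ∀ j : Fin d, δ j z =
      q.eval (lam j) * (Lagrange.basis univ lam j).eval z / q.eval z := by
    intro j
    rw [hδ, hbasis j, hder j, hpzfac j]
    have h1 := hql j
    have h2 := hzk j
    have h3 : (∏ k ∈ univ.erase j, (lam j - lam k)) ≠ 0 :=
      Finset.prod_ne_zero_iff.mpr fun k hk => hlk j k (Ne.symm (mem_erase.mp hk).1)
    field_simp
  -- the key identity: the δ's sum to 1
  have hsum : ∑ j, δ j z = 1 := by
    have hqz : ∑ j, q.eval (lam j) * (Lagrange.basis univ lam j).eval z = q.eval z := by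
      conv_rhs => rw [hq]
      rw [Lagrange.interpolate_apply, eval_finset_sum]
      simp
    calc ∑ j, δ j z
        = ∑ j, q.eval (lam j) * (Lagrange.basis univ lam j).eval z / q.eval z := by
          exact Finset.sum_congr rfl fun j _ => hδ' j
      _ = (∑ j, q.eval (lam j) * (Lagrange.basis univ lam j).eval z) / q.eval z := by
          rw [Finset.sum_div]
      _ = 1 := by rw [hqz, div_self hz]
  -- termwise identity
  have hterm : ∀ j ∈ univ.erase i, (p.eval z / q.eval z) * (σ i j * δ i z + σ j i * δ j z)
      = δ i z * δ j z := by
    intro j hj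
    have hij : j ≠ i := (mem_erase.mp hj).1
    rw [hσ i j (Ne.symm hij), hσ j i hij, hδ i z, hδ j z]
    have e1 : lam i - lam j = (z - lam j) - (z - lam i) := by ring
    have e2 : lam j - lam i = (z - lam i) - (z - lam j) := by ring
    rw [e1, e2]
    exact aux_sigma_delta (p.eval z / q.eval z) _ _ _ _
      (div_ne_zero (hdne i) (hql i)) (div_ne_zero (hdne j) (hql j))
      (hzk i) (hzk j) (by rw [← e2]; exact hlk j i hij)
  -- finish
  have herase : ∑ j ∈ univ.erase i, δ j z = 1 - δ i z := by
    rw [Finset.sum_erase_eq_sub (mem_univ i), hsum]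
  calc (δ i z) ^ 2 = δ i z - δ i z * (1 - δ i z) := by ring
    _ = δ i z - δ i z * ∑ j ∈ univ.erase i, δ j z := by rw [herase]
    _ = δ i z - ∑ j ∈ univ.erase i, δ i z * δ j z := by rw [Finset.mul_sum]
    _ = δ i z - (p.eval z / q.eval z) *
          ∑ j ∈ Finset.univ.erase i, (σ i j * δ i z + σ j i * δ j z) := by
        rw [Finset.mul_sum, Finset.sum_congr rfl hterm]
end
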